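/- Let G be a finitely generated group with finitely generated subgroups H and K, let A be a nontrivial H-almost invariant subset of G and let U be a nontrivial K-almost invariant subset of G. Fix a finite generating set of G and let d be the associated word metric. Then there exists D > 0 such that for every g ∈ G, if gU ≤ A (that is, gU ∩ A* is empty or is the only small corner among the four corners of (gU, A)), then gU is contained in the D-neighbourhood N_D(A) = {x ∈ G : d(x, A) ≤ D} of A. -/

import Mathlib

open Pointwise

universe u v

section Defs

variable {G : Type v} [Group G]

/-- `W` is `H`-finite: `W` is contained in the union of finitely many left cosets of `H`. -/
def HFin (H : Subgroup G) (W : Set G) : Prop :=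
  ∃ F : Finset G, W ⊆ (H : Set G) * (F : Set G)

/-- `X` is an `H`-almost invariant subset of `G`: `HX = X` and for every `a : G`
the symmetric difference of `X` and `Xa` is `H`-finite. -/
def AlmostInv (H : Subgroup G) (X : Set G) : Prop :=
  (∀ h ∈ H, h • X = X) ∧
    ∀ a : G, HFin H ((X \ (· * a) '' X) ∪ ((· * a) '' X \ X))

/-- `X` is a nontrivial `H`-almost invariant subset of `G`. -/
def NontrivAI (H : Subgroup G) (X : Set G) : Prop :=
  AlmostInv H X ∧ ¬ HFin H X ∧ ¬ HFin H Xᶜ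

/-- `X ~ Y` : the symmetric difference of `X` and `Y` is `H`-finite. -/
def AIEquiv (H : Subgroup G) (X Y : Set G) : Prop :=
  HFin H ((X \ Y) ∪ (Y \ X))

/-- `H` and `K` are commensurable: `H ⊓ K` has finite index in both `H` and `K`. -/
def CommSub (H K : Subgroup G) : Prop :=
  ((H ⊓ K).subgroupOf H).index ≠ 0 ∧ ((H ⊓ K).subgroupOf K).index ≠ 0

/-- `E(X₁,…,Xₙ)`: the set of all translates of the `Xᵢ` and of their complements. -/
def ESet {ι : Type*} (X : ι → Set G) : Set (Set G) :=
  {A | ∃ (i : ι) (g : G), A = g • X i ∨ A = (g • X i)ᶜ}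

/-- `W` is small with respect to `U ∈ E`: `W` is `gHᵢg⁻¹`-finite, where `U = gXᵢ` or
`U = (gXᵢ)ᶜ` (so that `U` is almost invariant over `gHᵢg⁻¹`). -/
def SmallFor {ι : Type*} (H : ι → Subgroup G) (X : ι → Set G) (U W : Set G) : Prop :=
  ∃ (i : ι) (g : G), (U = g • X i ∨ U = (g • X i)ᶜ) ∧ HFin (H i) (g⁻¹ • W)

/-- Condition (*) (good position): if two of the four corners of a pair of elements
of `E` are small, then one of the four corners is empty. -/
def GoodPos {ι : Type*} (H : ι → Subgroup G) (X : ι → Set G) : Prop :=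
  ∀ U ∈ ESet X, ∀ V ∈ ESet X, ∀ p q : Fin 4, p ≠ q →
    SmallFor H X U (![U ∩ V, U ∩ Vᶜ, Uᶜ ∩ V, Uᶜ ∩ Vᶜ] p) →
    SmallFor H X U (![U ∩ V, U ∩ Vᶜ, Uᶜ ∩ V, Uᶜ ∩ Vᶜ] q) →
    U ∩ V = ∅ ∨ U ∩ Vᶜ = ∅ ∨ Uᶜ ∩ V = ∅ ∨ Uᶜ ∩ Vᶜ = ∅

/-- Almost inclusion: `U ≤ V` iff `U ∩ Vᶜ` is empty or is the only small corner
among the four corners of `(U, V)`. -/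
def LeE {ι : Type*} (H : ι → Subgroup G) (X : ι → Set G) (U V : Set G) : Prop :=
  U ∩ Vᶜ = ∅ ∨
    (SmallFor H X U (U ∩ Vᶜ) ∧ ¬ SmallFor H X U (U ∩ V) ∧
      ¬ SmallFor H X U (Uᶜ ∩ V) ∧ ¬ SmallFor H X U (Uᶜ ∩ Vᶜ))

/-- `E(Y)` for a single almost invariant set. -/
def ESet1 (Y : Set G) : Set (Set G) := ESet (fun _ : Unit => Y)

def SmallFor1 (K : Subgroup G) (Y : Set G) (U W : Set G) : Prop :=
  SmallFor (fun _ : Unit => K) (fun _ : Unit => Y) U W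

def GoodPos1 (K : Subgroup G) (Y : Set G) : Prop :=
  GoodPos (fun _ : Unit => K) (fun _ : Unit => Y)

def LeE1 (K : Subgroup G) (Y : Set G) (U V : Set G) : Prop :=
  LeE (fun _ : Unit => K) (fun _ : Unit => Y) U V

/-- `Y` is invertible: some `g ∈ G` satisfies `gY = Y*`. -/
def InvertibleSet (Y : Set G) : Prop := ∃ g : G, g • Y = Yᶜ

/-- There is a `G`-equivariant bijection `E(Y₁) → E(Y₂)` preserving complementation,
the partial order of almost inclusion, and equivalence classes. -/
def GoodBij (K₁ : Subgroup G) (Y₁ : Set G) (K₂ : Subgroup G) (Y₂ : Set G) : Prop :=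
  ∃ φ : Set G → Set G,
    Set.BijOn φ (ESet1 Y₁) (ESet1 Y₂) ∧
    (∀ (g : G), ∀ U ∈ ESet1 Y₁, φ (g • U) = g • φ U) ∧
    (∀ U ∈ ESet1 Y₁, ∀ V ∈ ESet1 Y₁, LeE1 K₁ Y₁ U V → LeE1 K₂ Y₂ (φ U) (φ V)) ∧
    (∀ U ∈ ESet1 Y₁, φ Uᶜ = (φ U)ᶜ) ∧
    (∀ U ∈ ESet1 Y₁, SmallFor1 K₁ Y₁ U ((U \ φ U) ∪ (φ U \ U)))

/-- `x` lies in the ball of radius `R` about `g` in the word metric determined by `S`. -/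
def InBall (S : Finset G) (R : ℕ) (g x : G) : Prop :=
  ∃ l : List G, (∀ s ∈ l, s ∈ S ∨ s⁻¹ ∈ S) ∧ l.length ≤ R ∧ x = g * l.prod

/-- Some edge of the Cayley graph of `(G,S)` with one endpoint in `A` and the other in
`Aᶜ` has an endpoint in the ball `N_R(g)`. -/
def BNear (S : Finset G) (R : ℕ) (g : G) (A : Set G) : Prop :=
  ∃ x s : G, (s ∈ S ∨ s⁻¹ ∈ S) ∧
    ((x ∈ A ∧ x * s ∉ A) ∨ (x ∉ A ∧ x * s ∈ A)) ∧
    (InBall S R g x ∨ InBall S R g (x * s))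

/-- `E_R* = E − E_R`: the elements of `E` no edge of whose coboundary meets `N_R(g)`. -/
def ERstar (S : Finset G) (R : ℕ) (g : G) {ι : Type*} (X : ι → Set G) : Set (Set G) :=
  {A | A ∈ ESet X ∧ ¬ BNear S R g A}

/-- `U_g = {A ∈ E_R* : g ∈ A}`. -/
def UgSet (S : Finset G) (R : ℕ) (g : G) {ι : Type*} (X : ι → Set G) : Set (Set G) :=
  {A | A ∈ ERstar S R g X ∧ g ∈ A}

/-- `U₁ = U_g ∪ {B ∈ E_R : ∃ A ∈ U_g, A ≤ B}`. -/
def U1Set {ι : Type*} (H : ι → Subgroup G) (S : Finset G) (R : ℕ) (g : G) (X : ι → Set G) :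
    Set (Set G) :=
  UgSet S R g X ∪
    {B | (B ∈ ESet X ∧ BNear S R g B) ∧ ∃ A ∈ UgSet S R g X, LeE H X A B}

/-- `V₁ = E − (U₁ ∪ U₁*)`. -/
def V1Set {ι : Type*} (H : ι → Subgroup G) (S : Finset G) (R : ℕ) (g : G) (X : ι → Set G) :
    Set (Set G) :=
  ESet X \ (U1Set H S R g X ∪ (fun B : Set G => Bᶜ) '' U1Set H S R g X)

/-- `U₂ = U₁ ∪ {A₁} ∪ {B ∈ V₁ : A₁ ≤ B}`. -/
def U2Set {ι : Type*} (H : ι → Subgroup G) (S : Finset G) (R : ℕ) (g : G) (X : ι → Set G)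
    (A₁ : Set G) : Set (Set G) :=
  U1Set H S R g X ∪ {A₁} ∪ {B | B ∈ V1Set H S R g X ∧ LeE H X A₁ B}

/-- `G` is (canonically isomorphic to) the amalgamated free product `A *_C B` of its
subgroups `A` and `B` over `C`, expressed via the universal property of the pushout. -/
def IsAmalgam (C A B : Subgroup G) : Prop :=
  C ≤ A ∧ C ≤ B ∧
    ∀ (P : Type u) [Group P] (f : ↥A →* P) (g : ↥B →* P),
      (∀ (c : G) (hcA : c ∈ A) (hcB : c ∈ B), c ∈ C → f ⟨c, hcA⟩ = g ⟨c, hcB⟩) →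
      ∃! h : G →* P, (∀ (a : G) (ha : a ∈ A), h a = f ⟨a, ha⟩) ∧
        (∀ (b : G) (hb : b ∈ B), h b = g ⟨b, hb⟩)

/-- `G` is (canonically isomorphic to) an HNN extension with associated subgroup `C`:
there are a base subgroup `K`, associated subgroups `C, D ≤ K`, an isomorphism
`φ : C ≃ D` and a stable letter `t` conjugating `C` to `D` via `φ`, such that `G` has
the universal property of the HNN extension. -/
def IsHNNOver (C : Subgroup G) : Prop :=
  ∃ (K D : Subgroup G) (t : G) (φ : ↥C ≃* ↥D),
    C ≤ K ∧ D ≤ K ∧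
    (∀ c : ↥C, t⁻¹ * (c : G) * t = ((φ c : ↥D) : G)) ∧
    ∀ (P : Type u) [Group P] (f : ↥K →* P) (p : P),
      (∀ (c : ↥C) (hc : (c : G) ∈ K) (hc' : ((φ c : ↥D) : G) ∈ K),
        p⁻¹ * f ⟨(c : G), hc⟩ * p = f ⟨((φ c : ↥D) : G), hc'⟩) →
      ∃! h : G →* P, (∀ (k : G) (hk : k ∈ K), h k = f ⟨k, hk⟩) ∧ h t = p

/-- `G` splits over `C`: `G` is an amalgamated free product `A *_C B` in which `C` is a
proper subgroup of both `A` and `B`, or an HNN extension with associated subgroup `C`. -/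
def SplitsOver (C : Subgroup G) : Prop :=
  (∃ A B : Subgroup G, C ≠ A ∧ C ≠ B ∧ IsAmalgam.{u} C A B) ∨ IsHNNOver.{u} C

end Defs

/-!
Write `d_A = d(·, A)` for the word metric. The boundary of `gU` lies within bounded distance of
`gK`, and as `gU` and `gU*` both meet `A`, a path joining them inside `A ∪ N_ρ(H)` (which is
connected because `H` is finitely generated) crosses that boundary close to `A`.

If `gK` passes near `H`, translating by `H` puts `g` in a fixed finite ball, and a growth
argument in the graph of right cosets of `K` bounds `d_A` on `gU` by the number of cosets met
by the small corner `U ∩ g⁻¹A*`. Otherwise `gK`, being connected in a neighbourhood of itself,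
cannot reach deep into `A*` without passing near `H` (collar lemma), so the whole boundary of
`gU` stays close to `A`. Then every component of the deep part of `A*` that meets `gU` lies in
`gU`; an `H`-translate of it meets a fixed finite ball, so it is either unbounded, contradicting
the growth bound on `gU`, or uniformly bounded.
-/

open scoped symmDiff

lemma Set.Finite.exists_forall_le_of_bddAbove {ι : Type*} {F : Set ι} (hF : F.Finite)
    (T : ι → Set ℕ) : ∃ M, ∀ i ∈ F, BddAbove (T i) → ∀ n ∈ T i, n ≤ M := by
  obtain ⟨M, hM⟩ :=
    ((hF.subset (Set.sep_subset F fun i => BddAbove (T i))).bddAbove_biUnion).mpr fun i hi => hi.2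
  exact ⟨M, fun i hi hb n hn => hM (Set.mem_biUnion ⟨hi, hb⟩ hn)⟩

section

variable {G : Type*} [Group G]

section WordMetric

variable (S : Finset G)

def symmGen : Set G := (S : Set G) ∪ (S : Set G)⁻¹

lemma symmGen_finite : (symmGen S).Finite :=
  S.finite_toSet.union S.finite_toSet.inv

variable {S} {R R' : ℕ} {x y z : G}

lemma inv_mem_symmGen {s : G} (hs : s ∈ symmGen S) : s⁻¹ ∈ symmGen S := by
  rcases hs with hs | hs
  · exact Or.inr (by simpa using hs)
  · exact Or.inl hs

namespace InBall

lemma refl (x : G) : InBall S 0 x x := ⟨[], by simp, le_rfl, by simp⟩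

lemma mono (h : InBall S R x y) (hR : R ≤ R') : InBall S R' x y :=
  let ⟨l, hl, hlen, hy⟩ := h
  ⟨l, hl, hlen.trans hR, hy⟩

lemma trans (h₁ : InBall S R x y) (h₂ : InBall S R' y z) : InBall S (R + R') x z := by
  obtain ⟨l, hl, hlen, rfl⟩ := h₁
  obtain ⟨m, hm, hmlen, rfl⟩ := h₂
  refine ⟨l ++ m, fun s hs => ?_, by simp; omega, by simp [mul_assoc]⟩
  rcases List.mem_append.mp hs with hs | hs
  exacts [hl s hs, hm s hs]

lemma symm (h : InBall S R x y) : InBall S R y x := by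
  obtain ⟨l, hl, hlen, rfl⟩ := h
  refine ⟨(l.map (·⁻¹)).reverse, fun s hs => ?_, by simpa using hlen, ?_⟩
  · obtain ⟨t, ht, rfl⟩ := List.mem_map.mp (List.mem_reverse.mp hs)
    exact inv_mem_symmGen (hl t ht)
  · rw [← List.prod_inv_reverse]; group

lemma mul_left_iff (g : G) : InBall S R (g * x) (g * y) ↔ InBall S R x y := by
  simp only [InBall, mul_assoc, mul_right_inj]

lemma of_mem_symmGen {s : G} (hs : s ∈ symmGen S) (x : G) : InBall S 1 x (x * s) :=
  ⟨[s], fun t ht => List.mem_singleton.mp ht ▸ hs, le_rfl, by simp⟩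

end InBall

lemma exists_inBall (hS : Subgroup.closure (S : Set G) = ⊤) (x y : G) : ∃ R, InBall S R x y := by
  have hmem : x⁻¹ * y ∈ Submonoid.closure (symmGen S) := by
    rw [symmGen, ← Subgroup.closure_toSubmonoid, hS]; trivial
  obtain ⟨l, hl, hprod⟩ := Submonoid.exists_list_of_mem_closure hmem
  exact ⟨l.length, l, hl, le_rfl, by rw [hprod]; group⟩

variable (S) in
lemma finite_setOf_inBall (R : ℕ) (x : G) : {y | InBall S R x y}.Finite := by
  induction R generalizing x with
  | zero =>
    refine (Set.finite_singleton x).subset fun y ⟨l, _, hlen, hy⟩ => ?_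
    simp_all [List.length_eq_zero_iff.mp (Nat.le_zero.mp hlen)]
  | succ R ih =>
    refine ((Set.finite_singleton x).union
      ((symmGen_finite S).biUnion fun s _ => ih (x * s))).subset ?_
    rintro y ⟨_ | ⟨s, l⟩, hl, hlen, rfl⟩
    · simp
    · refine Or.inr (Set.mem_biUnion (x := s) (hl s (by simp)) ?_)
      exact show InBall S R (x * s) _ from
        ⟨l, fun t ht => hl t (by simp [ht]), by simpa using hlen, by simp [mul_assoc]⟩

variable (S) in
/-- This is `0`, not `∞`, when `W` is empty. -/
noncomputable def wordInfDist (W : Set G) (x : G) : ℕ :=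
  sInf {R | ∃ w ∈ W, InBall S R w x}

variable {W : Set G}

lemma wordInfDist_le {w : G} (hw : w ∈ W) (h : InBall S R w x) : wordInfDist S W x ≤ R :=
  Nat.sInf_le ⟨w, hw, h⟩

lemma exists_inBall_wordInfDist (hS : Subgroup.closure (S : Set G) = ⊤) (hW : W.Nonempty)
    (x : G) : ∃ w ∈ W, InBall S (wordInfDist S W x) w x := by
  obtain ⟨w, hw⟩ := hW
  obtain ⟨R, h⟩ := exists_inBall hS w x
  exact Nat.sInf_mem (s := {R | ∃ w ∈ W, InBall S R w x}) ⟨R, w, hw, h⟩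

lemma wordInfDist_le_iff (hS : Subgroup.closure (S : Set G) = ⊤) (hW : W.Nonempty) :
    wordInfDist S W x ≤ R ↔ ∃ w ∈ W, InBall S R w x := by
  refine ⟨fun h => ?_, fun ⟨w, hw, hR⟩ => wordInfDist_le hw hR⟩
  obtain ⟨w, hw, hR⟩ := exists_inBall_wordInfDist hS hW x
  exact ⟨w, hw, hR.mono h⟩

lemma wordInfDist_eq_zero_of_mem (hx : x ∈ W) : wordInfDist S W x = 0 :=
  Nat.le_zero.mp (wordInfDist_le hx (.refl x))

lemma not_mem_of_wordInfDist_pos (h : 0 < wordInfDist S W x) : x ∉ W :=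
  fun hx => h.ne' (wordInfDist_eq_zero_of_mem hx)

lemma wordInfDist_le_add (hS : Subgroup.closure (S : Set G) = ⊤) (hW : W.Nonempty)
    (h : InBall S R x y) : wordInfDist S W y ≤ wordInfDist S W x + R := by
  obtain ⟨w, hw, hwx⟩ := exists_inBall_wordInfDist hS hW x
  exact wordInfDist_le hw (hwx.trans h)

lemma wordInfDist_smul (g x : G) : wordInfDist S (g • W) (g * x) = wordInfDist S W x := by
  unfold wordInfDist
  congr 1
  ext R
  constructor
  · rintro ⟨_, ⟨w, hw, rfl⟩, h⟩
    exact ⟨w, hw, (InBall.mul_left_iff g).mp h⟩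
  · rintro ⟨w, hw, h⟩
    exact ⟨g * w, ⟨w, hw, rfl⟩, (InBall.mul_left_iff g).mpr h⟩

lemma wordInfDist_mul_left {g : G} (hg : g • W = W) (x : G) :
    wordInfDist S W (g * x) = wordInfDist S W x := by
  rw [← wordInfDist_smul g x, hg]

lemma wordInfDist_subgroup_mul {K : Subgroup G} {k : G} (hk : k ∈ K) (x : G) :
    wordInfDist S K (k * x) = wordInfDist S K x :=
  wordInfDist_mul_left (smul_coe_set hk) x

end WordMetric

section Paths

variable (S : Finset G)

/-- Paths in the Cayley graph of `(G, S)` inside `P`; the trivial path is allowed even outside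
`P`. -/
def ReachIn (P : Set G) : G → G → Prop :=
  Relation.ReflTransGen fun x y => x ∈ P ∧ y ∈ P ∧ ∃ s ∈ symmGen S, y = x * s

def innerBoundary (V : Set G) : Set G :=
  {z | z ∈ V ∧ ∃ s ∈ symmGen S, z * s ∉ V}

variable {S} {P Q V : Set G} {x y z : G}

namespace ReachIn

lemma single {s : G} (hs : s ∈ symmGen S) (hx : x ∈ P) (hxs : x * s ∈ P) :
    ReachIn S P x (x * s) :=
  Relation.ReflTransGen.single (show _ ∧ _ ∧ _ from ⟨hx, hxs, s, hs, rfl⟩)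

lemma trans (h₁ : ReachIn S P x y) (h₂ : ReachIn S P y z) : ReachIn S P x z :=
  Relation.ReflTransGen.trans h₁ h₂

lemma symm (h : ReachIn S P x y) : ReachIn S P y x := by
  induction h with
  | refl => exact .refl
  | tail _ hbc ih =>
    obtain ⟨hb, hc, s, hs, rfl⟩ := hbc
    exact .head (show _ ∧ _ ∧ _ from ⟨hc, hb, s⁻¹, inv_mem_symmGen hs, by group⟩) ih

lemma mono (h : ReachIn S P x y) (hPQ : P ⊆ Q) : ReachIn S Q x y :=
  Relation.ReflTransGen.mono (fun _ _ ⟨ha, hb, hab⟩ => ⟨hPQ ha, hPQ hb, hab⟩) x y h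

lemma mem (h : ReachIn S P x y) (hx : x ∈ P) : y ∈ P := by
  induction h with
  | refl => exact hx
  | tail _ hbc _ => exact hbc.2.1

lemma smul (h : ReachIn S P x y) (g : G) : ReachIn S (g • P) (g * x) (g * y) := by
  induction h with
  | refl => exact .refl
  | tail _ hbc ih =>
    obtain ⟨hb, hc, s, hs, rfl⟩ := hbc
    exact ih.tail (show _ ∧ _ ∧ _ from ⟨⟨_, hb, rfl⟩, ⟨_, hc, rfl⟩, s, hs, by simp [mul_assoc]⟩)

lemma exists_exit (h : ReachIn S P x y) (hx : x ∈ Q) (hy : y ∉ Q) :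
    ∃ a s, ReachIn S (P ∩ Q) x a ∧ s ∈ symmGen S ∧ a * s ∈ P ∧ a * s ∉ Q := by
  induction h using Relation.ReflTransGen.head_induction_on with
  | refl => exact absurd hx hy
  | @head a c hac _ ih =>
    obtain ⟨ha, hc, s, hs, rfl⟩ := hac
    by_cases hcQ : a * s ∈ Q
    · obtain ⟨b, t, hb, ht⟩ := ih hcQ
      exact ⟨b, t, (single hs (P := P ∩ Q) ⟨ha, hx⟩ ⟨hc, hcQ⟩).trans hb, ht⟩
    · exact ⟨a, s, .refl, hs, hc, hcQ⟩

lemma mem_of_disjoint (h : ReachIn S P x y) (hx : x ∈ V) (hP : Disjoint P (innerBoundary S V)) :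
    y ∈ V := by
  induction h with
  | refl => exact hx
  | tail _ hbc ih =>
    obtain ⟨hb, -, s, hs, rfl⟩ := hbc
    by_contra hbs
    exact Set.disjoint_left.mp hP hb ⟨ih, s, hs, hbs⟩

end ReachIn

lemma InBall.reachIn {R : ℕ} (h : InBall S R x y) : ReachIn S {z | InBall S R x z} x y := by
  obtain ⟨l, hl, hlen, rfl⟩ := h
  refine (?_ : ReachIn S {z | InBall S l.length x z} x (x * l.prod)).mono fun z hz => hz.mono hlen
  clear hlen
  induction l generalizing x with
  | nil => rw [List.prod_nil, mul_one]; exact .refl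
  | cons s l ih =>
    have hs : s ∈ symmGen S := hl s (by simp)
    have hsub : {z | InBall S l.length (x * s) z} ⊆ {z | InBall S (s :: l).length x z} :=
      fun z hz => by simpa [add_comm] using (InBall.of_mem_symmGen hs x).trans hz
    have hstep : ReachIn S {z | InBall S (s :: l).length x z} x (x * s) :=
      .single hs ((InBall.refl x).mono (Nat.zero_le _))
        (hsub ((InBall.refl _).mono (Nat.zero_le _)))
    simpa [mul_assoc] using hstep.trans ((ih (fun t ht => hl t (by simp [ht]))).mono hsub)

lemma reachIn_univ (hS : Subgroup.closure (S : Set G) = ⊤) (x y : G) :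
    ReachIn S Set.univ x y :=
  let ⟨_, h⟩ := exists_inBall hS x y
  h.reachIn.mono (Set.subset_univ _)

lemma exists_exit (hS : Subgroup.closure (S : Set G) = ⊤) (hx : x ∈ Q) (hy : y ∉ Q) :
    ∃ a s, ReachIn S Q x a ∧ s ∈ symmGen S ∧ a * s ∉ Q :=
  let ⟨a, s, ha, hs, _, has⟩ := (reachIn_univ hS x y).exists_exit hx hy
  ⟨a, s, ha.mono Set.inter_subset_right, hs, has⟩

end Paths

section AlmostInvariant

variable {S : Finset G} {K H : Subgroup G} {W A U : Set G} {x y : G}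

/-- `HFin` counts right cosets `K x`, hence `rightRel` rather than `G ⧸ K`. -/
abbrev rightCosetMk (K : Subgroup G) (x : G) : Quotient (QuotientGroup.rightRel K) :=
  Quotient.mk _ x

lemma rightCosetMk_eq_iff : rightCosetMk K x = rightCosetMk K y ↔ y * x⁻¹ ∈ K := by
  rw [Quotient.eq]; exact QuotientGroup.rightRel_apply

lemma rightCosetMk_mul_of_mem {k : G} (hk : k ∈ K) (x : G) :
    rightCosetMk K (k * x) = rightCosetMk K x :=
  rightCosetMk_eq_iff.mpr (by simpa using K.inv_mem hk)

lemma image_rightCosetMk_smul {k : G} (hk : k ∈ K) (W : Set G) :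
    rightCosetMk K '' (k • W) = rightCosetMk K '' W := by
  rw [← Set.image_smul, Set.image_image]
  simp only [smul_eq_mul, rightCosetMk_mul_of_mem hk]

lemma hFin_iff_finite_image : HFin K W ↔ (rightCosetMk K '' W).Finite := by
  constructor
  · rintro ⟨F, hF⟩
    refine (F.finite_toSet.image (rightCosetMk K)).subset ?_
    rintro _ ⟨w, hw, rfl⟩
    obtain ⟨k, hk, f, hf, rfl⟩ := hF hw
    exact ⟨f, hf, (rightCosetMk_mul_of_mem hk f).symm⟩
  · intro h
    refine ⟨(h.image Quotient.out).toFinset, fun w hw => ?_⟩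
    have hout : rightCosetMk K (rightCosetMk K w).out = rightCosetMk K w := Quotient.out_eq _
    exact ⟨_, rightCosetMk_eq_iff.mp hout, _, by simpa using ⟨w, hw, rfl⟩, by group⟩

lemma HFin.mono {V : Set G} (h : HFin K W) (hVW : V ⊆ W) : HFin K V :=
  let ⟨F, hF⟩ := h
  ⟨F, hVW.trans hF⟩

lemma nonempty_of_not_hFin (h : ¬HFin K W) : W.Nonempty :=
  Set.nonempty_iff_ne_empty.mpr fun hW => h ⟨∅, by simp [hW]⟩

lemma HFin.exists_wordInfDist_le (S : Finset G) (h : HFin K W) :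
    ∃ m, ∀ x ∈ W, wordInfDist S K x ≤ m := by
  obtain ⟨F, hF⟩ := h
  refine ⟨F.sup (wordInfDist S K), fun x hx => ?_⟩
  obtain ⟨k, hk, f, hf, rfl⟩ := hF hx
  rw [wordInfDist_subgroup_mul hk]
  exact Finset.le_sup hf

lemma AlmostInv.hFin_biUnion (hA : AlmostInv H A) {F : Set G} (hF : F.Finite) :
    HFin H (⋃ a ∈ F, A ∆ ((· * a) '' A)) := by
  rw [hFin_iff_finite_image, Set.image_iUnion₂]
  exact hF.biUnion fun a _ => hFin_iff_finite_image.mp (hA.2 a)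

lemma AlmostInv.exists_innerBoundary_near (S : Finset G) (hU : AlmostInv K U) :
    ∃ m, ∀ z ∈ innerBoundary S U, wordInfDist S K z ≤ m := by
  refine ((hU.hFin_biUnion (symmGen_finite S)).exists_wordInfDist_le S).imp
    fun m hm z ⟨hzU, s, hs, hzs⟩ => hm z ?_
  refine Set.mem_biUnion (inv_mem_symmGen hs) (Or.inl ⟨hzU, ?_⟩)
  rintro ⟨u, hu, rfl⟩
  exact hzs (by simpa using hu)

lemma AlmostInv.exists_collar (hS : Subgroup.closure (S : Set G) = ⊤) (hA : AlmostInv H A)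
    (hAn : A.Nonempty) (c : ℕ) :
    ∃ c', ∀ x ∉ A, wordInfDist S A x ≤ c → wordInfDist S H x ≤ c' := by
  refine ((hA.hFin_biUnion (finite_setOf_inBall S c 1)).exists_wordInfDist_le S).imp
    fun c' hc' x hx hxc => hc' x ?_
  obtain ⟨a, ha, hax⟩ := (wordInfDist_le_iff hS hAn).mp hxc
  refine Set.mem_biUnion (x := a⁻¹ * x) ?_ (Or.inr ⟨⟨a, ha, by group⟩, hx⟩)
  exact (InBall.mul_left_iff a).mp (by simpa using hax)

lemma AlmostInv.wordInfDist_mul_left (hA : AlmostInv H A) {h : G} (hh : h ∈ H) (x : G) :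
    wordInfDist S A (h * x) = wordInfDist S A x :=
  _root_.wordInfDist_mul_left (hA.1 h hh) x

lemma smul_setOf_wordInfDist_le {k : G} (hk : k ∈ K) (ρ : ℕ) :
    k • {v | wordInfDist S K v ≤ ρ} = {v | wordInfDist S K v ≤ ρ} := by
  ext v
  rw [Set.mem_smul_set_iff_inv_smul_mem, smul_eq_mul]
  simp [wordInfDist_subgroup_mul (K.inv_mem hk)]

lemma Subgroup.FG.exists_reachIn_nbhd (hS : Subgroup.closure (S : Set G) = ⊤) (hK : K.FG) :
    ∃ ρ, ∀ k ∈ K, ReachIn S {v | wordInfDist S K v ≤ ρ} 1 k := by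
  obtain ⟨T, rfl⟩ := hK
  choose R hR using fun t => exists_inBall hS 1 t
  refine ⟨T.sup R, fun k hk => ?_⟩
  induction hk using Subgroup.closure_induction with
  | mem t ht =>
    exact (hR t).reachIn.mono fun v hv =>
      (wordInfDist_le (one_mem _) hv).trans (Finset.le_sup ht)
  | one => exact .refl
  | mul x y hx hy ihx ihy =>
    exact ihx.trans (by simpa [smul_setOf_wordInfDist_le hx] using ihy.smul x)
  | inv x hx ih =>
    simpa [smul_setOf_wordInfDist_le (inv_mem hx)] using (ih.smul x⁻¹).symm

end AlmostInvariant

section Layers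

variable (S : Finset G) (K : Subgroup G) (W : Set G) (x : G)

/-- The ball of radius `j` about `K x` in the graph induced on right cosets of `K` by the
Cayley graph restricted to `W`, as a union of cosets. -/
def cosetLayer : ℕ → Set G
  | 0 => (K : Set G) * {x}
  | j + 1 => cosetLayer j ∪ (K : Set G) * (cosetLayer j * symmGen S ∩ W)

variable {S K W x} {j : ℕ} {c : G}

lemma cosetLayer_mono : Monotone (cosetLayer S K W x) :=
  monotone_nat_of_le_succ fun _ => Set.subset_union_left

lemma mul_mem_cosetLayer {k : G} (hk : k ∈ K) (hc : c ∈ cosetLayer S K W x j) :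
    k * c ∈ cosetLayer S K W x j := by
  induction j generalizing c with
  | zero =>
    obtain ⟨k', hk', y, hy, rfl⟩ := hc
    exact ⟨k * k', K.mul_mem hk hk', y, hy, mul_assoc ..⟩
  | succ j ih =>
    rcases hc with hc | ⟨k', hk', y, hy, rfl⟩
    · exact Or.inl (ih hc)
    · exact Or.inr ⟨k * k', K.mul_mem hk hk', y, hy, mul_assoc ..⟩

lemma mem_cosetLayer_of_rightCosetMk_eq {c' : G} (hc : c ∈ cosetLayer S K W x j)
    (he : rightCosetMk K c = rightCosetMk K c') : c' ∈ cosetLayer S K W x j := by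
  simpa using mul_mem_cosetLayer (rightCosetMk_eq_iff.mp he) hc

lemma mul_mem_cosetLayer_succ {s : G} (hc : c ∈ cosetLayer S K W x j) (hs : s ∈ symmGen S)
    (hcs : c * s ∈ W) : c * s ∈ cosetLayer S K W x (j + 1) :=
  Or.inr ⟨1, K.one_mem, c * s, ⟨⟨c, hc, s, hs, rfl⟩, hcs⟩, one_mul _⟩

lemma exists_of_mem_cosetLayer (hW : ∀ k ∈ K, ∀ w ∈ W, k * w ∈ W) (hx : x ∈ W)
    (hc : c ∈ cosetLayer S K W x j) : ∃ k ∈ K, ∃ y ∈ W, c = k * y ∧ InBall S j x y := by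
  induction j generalizing c with
  | zero =>
    obtain ⟨k, hk, _, rfl, rfl⟩ := hc
    exact ⟨k, hk, _, hx, rfl, .refl _⟩
  | succ j ih =>
    rcases hc with hc | ⟨k, hk, _, ⟨⟨z, hz, s, hs, rfl⟩, hzs⟩, rfl⟩
    · obtain ⟨k, hk, y, hy, rfl, hxy⟩ := ih hc
      exact ⟨k, hk, y, hy, rfl, hxy.mono j.le_succ⟩
    · obtain ⟨k', hk', y, hy, rfl, hxy⟩ := ih hz
      refine ⟨k * k', K.mul_mem hk hk', y * s, ?_, by group, hxy.trans (.of_mem_symmGen hs y)⟩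
      simpa [mul_assoc] using hW _ (K.inv_mem hk') _ hzs

lemma cosetLayer_subset_of_succ_subset
    (h : cosetLayer S K W x (j + 1) ⊆ cosetLayer S K W x j) (m : ℕ) :
    cosetLayer S K W x m ⊆ cosetLayer S K W x j := by
  induction m with
  | zero => exact cosetLayer_mono (Nat.zero_le j)
  | succ m ih =>
    refine (Set.union_subset_union ih (Set.mul_subset_mul_left ?_)).trans h
    exact Set.inter_subset_inter_left _ (Set.mul_subset_mul_right ih)

lemma finite_image_cosetLayer (hW : ∀ k ∈ K, ∀ w ∈ W, k * w ∈ W) (hx : x ∈ W) (j : ℕ) :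
    (rightCosetMk K '' cosetLayer S K W x j).Finite := by
  refine ((finite_setOf_inBall S j x).image (rightCosetMk K)).subset ?_
  rintro _ ⟨c, hc, rfl⟩
  obtain ⟨k, hk, y, -, rfl, hxy⟩ := exists_of_mem_cosetLayer hW hx hc
  exact ⟨y, hxy, (rightCosetMk_mul_of_mem hk y).symm⟩

/-- Otherwise the layers would stabilise, and their union would be `K`-finite. -/
lemma le_ncard_image_cosetLayer (hW : ∀ k ∈ K, ∀ w ∈ W, k * w ∈ W) (hx : x ∈ W)
    (hL : ¬HFin K (⋃ j, cosetLayer S K W x j)) (j : ℕ) :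
    j + 1 ≤ (rightCosetMk K '' cosetLayer S K W x j).ncard := by
  have hlt : ∀ j, (rightCosetMk K '' cosetLayer S K W x j).ncard <
      (rightCosetMk K '' cosetLayer S K W x (j + 1)).ncard := by
    refine fun j => Set.ncard_lt_ncard ⟨Set.image_mono (cosetLayer_mono j.le_succ),
      fun hsub => hL ?_⟩ (finite_image_cosetLayer hW hx _)
    have hstab : cosetLayer S K W x (j + 1) ⊆ cosetLayer S K W x j := fun c hc => by
      obtain ⟨c', hc', he⟩ := hsub ⟨c, hc, rfl⟩
      exact mem_cosetLayer_of_rightCosetMk_eq hc' he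
    rw [hFin_iff_finite_image, Set.image_iUnion]
    exact (finite_image_cosetLayer hW hx j).subset
      (Set.iUnion_subset fun m => Set.image_mono (cosetLayer_subset_of_succ_subset hstab m))
  induction j with
  | zero =>
    have hx0 : x ∈ cosetLayer S K W x 0 := ⟨1, K.one_mem, x, rfl, one_mul x⟩
    have := (Set.ncard_pos (finite_image_cosetLayer hW hx 0)).mpr ⟨_, x, hx0, rfl⟩
    omega
  | succ j ih => have := hlt j; omega

lemma subset_iUnion_cosetLayer {V : Set G} (hjoin : ∀ u ∈ V, ∃ k ∈ K, ReachIn S W u k)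
    (hx : x ∈ V) : V ⊆ ⋃ j, cosetLayer S K W x j := by
  have hreach : ∀ {y z}, ReachIn S W y z → y ∈ ⋃ j, cosetLayer S K W x j →
      z ∈ ⋃ j, cosetLayer S K W x j := by
    intro y z h hy
    induction h with
    | refl => exact hy
    | tail _ hbc ih =>
      obtain ⟨-, hc, s, hs, rfl⟩ := hbc
      obtain ⟨j, hj⟩ := Set.mem_iUnion.mp ih
      exact Set.mem_iUnion.mpr ⟨j + 1, mul_mem_cosetLayer_succ hj hs hc⟩
  obtain ⟨k₁, hk₁, hxk₁⟩ := hjoin x hx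
  obtain ⟨j, hj⟩ := Set.mem_iUnion.mp
    (hreach hxk₁ (Set.mem_iUnion.mpr ⟨0, 1, K.one_mem, x, rfl, one_mul x⟩))
  intro u hu
  obtain ⟨k₂, hk₂, huk₂⟩ := hjoin u hu
  refine hreach huk₂.symm (Set.mem_iUnion.mpr ⟨j, ?_⟩)
  simpa using mul_mem_cosetLayer (K.mul_mem hk₂ (K.inv_mem hk₁)) hj

end Layers

section Growth

variable {S : Finset G} {K : Subgroup G} {U : Set G} {m : ℕ}

lemma exists_reachIn_mem_subgroup (hS : Subgroup.closure (S : Set G) = ⊤)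
    (hUc : Uᶜ.Nonempty) (hm : ∀ z ∈ innerBoundary S U, wordInfDist S K z ≤ m) {u : G}
    (hu : u ∈ U) : ∃ k ∈ K, ReachIn S (U ∪ (K : Set G) * {f | InBall S m 1 f}) u k := by
  obtain ⟨u', hu'⟩ := hUc
  obtain ⟨v, s, huv, hs, hvs⟩ := exists_exit hS hu hu'
  have hv : v ∈ innerBoundary S U := ⟨huv.mem hu, s, hs, hvs⟩
  obtain ⟨k, hk, hkv⟩ := (wordInfDist_le_iff hS ⟨1, K.one_mem⟩).mp (hm v hv)
  refine ⟨k, hk, (huv.mono Set.subset_union_left).trans (hkv.reachIn.symm.mono fun z hz => ?_)⟩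
  exact Or.inr ⟨k, hk, k⁻¹ * z, (InBall.mul_left_iff k).mp (by simpa using hz), by group⟩

/-- While `r < d(x, Y)`, the layer of radius `r` about `x` in `U ∪ K B` meets `r + 1` cosets of
`K`, each met by `U ∩ Yᶜ` or by the finite ball `B`. -/
lemma AlmostInv.exists_wordInfDist_le_ncard (hS : Subgroup.closure (S : Set G) = ⊤)
    (hU : AlmostInv K U) (hUn : ¬HFin K U) (hUc : Uᶜ.Nonempty) :
    ∃ β, ∀ Y x, x ∈ U → HFin K (U ∩ Yᶜ) →
      wordInfDist S Y x ≤ (rightCosetMk K '' (U ∩ Yᶜ)).ncard + β := by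
  obtain ⟨m, hm⟩ := hU.exists_innerBoundary_near S
  set B := {f | InBall S m 1 f}
  set W := U ∪ (K : Set G) * B
  have hW : ∀ k ∈ K, ∀ w ∈ W, k * w ∈ W := by
    rintro k hk w (hw | ⟨k', hk', f, hf, rfl⟩)
    · exact Or.inl (hU.1 k hk ▸ Set.smul_mem_smul_set hw)
    · exact Or.inr ⟨k * k', K.mul_mem hk hk', f, hf, mul_assoc ..⟩
  refine ⟨(rightCosetMk K '' B).ncard, fun Y x hx hfin => ?_⟩
  by_contra! hfar
  set r := (rightCosetMk K '' (U ∩ Yᶜ)).ncard + (rightCosetMk K '' B).ncard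
  have hsub : rightCosetMk K '' cosetLayer S K W x r ⊆
      rightCosetMk K '' (U ∩ Yᶜ) ∪ rightCosetMk K '' B := by
    rintro _ ⟨c, hc, rfl⟩
    obtain ⟨k, hk, y, hy | ⟨k', hk', f, hf, rfl⟩, rfl, hxy⟩ :=
      exists_of_mem_cosetLayer hW (Or.inl hx) hc
    · refine Or.inl ⟨y, ⟨hy, fun hyY => ?_⟩, (rightCosetMk_mul_of_mem hk y).symm⟩
      exact hfar.not_ge (wordInfDist_le hyY hxy.symm)
    · exact Or.inr ⟨f, hf, by rw [← mul_assoc, rightCosetMk_mul_of_mem (K.mul_mem hk hk')]⟩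
  have hL := subset_iUnion_cosetLayer (fun u hu => exists_reachIn_mem_subgroup hS hUc hm hu) hx
  have hgrow := le_ncard_image_cosetLayer hW (Or.inl hx) (fun h => hUn (h.mono hL)) r
  have hle := Set.ncard_le_ncard hsub ((hFin_iff_finite_image.mp hfin).union
    ((finite_setOf_inBall S m 1).image _))
  have := Set.ncard_union_le (rightCosetMk K '' (U ∩ Yᶜ)) (rightCosetMk K '' B)
  omega

end Growth

section Translates

variable {S : Finset G} {H K : Subgroup G} {A U : Set G}

lemma wordInfDist_inv_smul (W : Set G) (g x : G) :
    wordInfDist S (g⁻¹ • W) x = wordInfDist S W (g * x) := by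
  rw [← wordInfDist_smul g x, smul_inv_smul]

lemma inv_mul_mem_innerBoundary {V : Set G} {g z : G} (hz : z ∈ innerBoundary S (g • V)) :
    g⁻¹ * z ∈ innerBoundary S V := by
  obtain ⟨hz, s, hs, hzs⟩ := hz
  simp only [Set.mem_smul_set_iff_inv_smul_mem, smul_eq_mul] at hz hzs
  exact ⟨hz, s, hs, by rwa [mul_assoc]⟩

lemma AlmostInv.exists_reachIn_union_nbhd (hS : Subgroup.closure (S : Set G) = ⊤) (hH : H.FG)
    (hA : AlmostInv H A) (hAc : Aᶜ.Nonempty) :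
    ∃ ρ, ∀ a ∈ A, ∀ b ∈ A, ReachIn S (A ∪ {v | wordInfDist S H v ≤ ρ}) a b := by
  obtain ⟨m, hm⟩ := hA.exists_innerBoundary_near S
  obtain ⟨ρ, hρ⟩ := hH.exists_reachIn_nbhd hS
  refine ⟨max m ρ, ?_⟩
  set P := A ∪ {v | wordInfDist S H v ≤ max m ρ}
  suffices h : ∀ a ∈ A, ReachIn S P a 1 from fun a ha b hb => (h a ha).trans (h b hb).symm
  intro a ha
  obtain ⟨a', ha'⟩ := hAc
  obtain ⟨v, s, hav, hs, hvs⟩ := exists_exit hS ha ha'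
  obtain ⟨h, hh, hhv⟩ :=
    (wordInfDist_le_iff hS ⟨1, H.one_mem⟩).mp (hm v ⟨hav.mem ha, s, hs, hvs⟩)
  have hvh : ReachIn S P v h := (hhv.reachIn.mono (Q := P) fun z hz =>
    Or.inr ((wordInfDist_le hh hz).trans (le_max_left _ _))).symm
  have hh1 : ReachIn S P h 1 := ((hρ h hh).mono (Q := P)
    fun z (hz : wordInfDist S H z ≤ ρ) => Or.inr (le_max_of_le_right hz : _ ≤ max m ρ)).symm
  exact (hav.mono Set.subset_union_left).trans (hvh.trans hh1)

lemma AlmostInv.exists_innerBoundary_wordInfDist_le (hS : Subgroup.closure (S : Set G) = ⊤)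
    (hH : H.FG) (hA : AlmostInv H A) (hAc : Aᶜ.Nonempty) :
    ∃ c, ∀ V : Set G, (V ∩ A).Nonempty → (Vᶜ ∩ A).Nonempty →
      ∃ z ∈ innerBoundary S V, wordInfDist S A z ≤ c := by
  obtain ⟨ρ, hρ⟩ := hA.exists_reachIn_union_nbhd hS hH hAc
  refine ⟨ρ + wordInfDist S A 1, fun V ⟨p, hpV, hpA⟩ ⟨q, hqV, hqA⟩ => ?_⟩
  obtain ⟨z, s, hz, hs, -, hzs⟩ := (hρ p hpA q hqA).exists_exit hpV hqV
  obtain ⟨hzP, hzV⟩ := hz.mem ⟨Or.inl hpA, hpV⟩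
  refine ⟨z, ⟨hzV, s, hs, hzs⟩, ?_⟩
  rcases hzP with hzA | hzH
  · simp [wordInfDist_eq_zero_of_mem hzA]
  · obtain ⟨h, hh, hhz⟩ := (wordInfDist_le_iff hS ⟨1, H.one_mem⟩).mp hzH
    have hh1 : wordInfDist S A h = wordInfDist S A 1 := by
      simpa using hA.wordInfDist_mul_left hh 1
    have := wordInfDist_le_add hS ⟨p, hpA⟩ hhz
    omega

/-- `gK` is connected inside a neighbourhood of itself, so otherwise a path there would cross
the level `c + 1` of `d(·, A)` outside `A`, where the collar lemma puts it near `H`. -/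
lemma AlmostInv.exists_coset_near_of_far (hS : Subgroup.closure (S : Set G) = ⊤) (hK : K.FG)
    (hA : AlmostInv H A) (hAn : A.Nonempty) (c : ℕ) :
    ∃ r, ∀ g : G, (∃ k ∈ K, wordInfDist S A (g * k) ≤ c) →
      (∀ k ∈ K, r < wordInfDist S H (g * k)) → ∀ k ∈ K, wordInfDist S A (g * k) ≤ c + 1 := by
  obtain ⟨ρ, hρ⟩ := hK.exists_reachIn_nbhd hS
  obtain ⟨c', hc'⟩ := hA.exists_collar hS hAn (c + 1)
  refine ⟨c' + ρ, fun g ⟨k₀, hk₀, h₀⟩ hfar k hk => ?_⟩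
  by_contra! hdeep
  have hk₀ρ : k₀ ∈ {v | wordInfDist S K v ≤ ρ} := by simp [wordInfDist_eq_zero_of_mem hk₀]
  obtain ⟨a, s, ha, hs, ⟨u, hu, hus⟩, has⟩ :=
    (((hρ k₀ hk₀).symm.trans (hρ k hk)).smul g).exists_exit
      (Q := {v | wordInfDist S A v ≤ c}) h₀ (show ¬wordInfDist S A (g * k) ≤ c by omega)
  have haQ : wordInfDist S A a ≤ c := (ha.mem ⟨⟨k₀, hk₀ρ, rfl⟩, h₀⟩).2
  have hlip := wordInfDist_le_add hS hAn (InBall.of_mem_symmGen hs a)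
  replace has : c < wordInfDist S A (a * s) := not_le.mp has
  have hasH := hc' (a * s) (not_mem_of_wordInfDist_pos (S := S) (by omega)) (by omega)
  obtain ⟨k₁, hk₁, hk₁u⟩ := (wordInfDist_le_iff hS ⟨1, K.one_mem⟩).mp hu
  have hgk₁ := wordInfDist_le_add hS ⟨1, H.one_mem⟩ ((InBall.mul_left_iff g).mpr hk₁u).symm
  rw [show g * u = a * s from hus] at hgk₁
  have := hfar k₁ hk₁
  omega

lemma exists_inBall_of_mem_innerBoundary_smul (hS : Subgroup.closure (S : Set G) = ⊤) {m : ℕ}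
    (hm : ∀ z ∈ innerBoundary S U, wordInfDist S K z ≤ m) {g z : G}
    (hz : z ∈ innerBoundary S (g • U)) : ∃ k ∈ K, InBall S m (g * k) z := by
  obtain ⟨k, hk, hkz⟩ :=
    (wordInfDist_le_iff hS ⟨1, K.one_mem⟩).mp (hm _ (inv_mul_mem_innerBoundary hz))
  exact ⟨k, hk, by simpa using (InBall.mul_left_iff g).mpr hkz⟩

lemma exists_innerBoundary_translate_near_of_far (hS : Subgroup.closure (S : Set G) = ⊤)
    (hH : H.FG) (hK : K.FG) (hA : AlmostInv H A) (hAn : A.Nonempty) (hAc : Aᶜ.Nonempty)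
    (hU : AlmostInv K U) :
    ∃ r c, ∀ g : G, (g • U ∩ A).Nonempty → ((g • U)ᶜ ∩ A).Nonempty →
      (∀ k ∈ K, r < wordInfDist S H (g * k)) →
      ∀ z ∈ innerBoundary S (g • U), wordInfDist S A z ≤ c := by
  obtain ⟨m, hm⟩ := hU.exists_innerBoundary_near S
  obtain ⟨c, hc⟩ := hA.exists_innerBoundary_wordInfDist_le hS hH hAc
  obtain ⟨r, hr⟩ := hA.exists_coset_near_of_far hS hK hAn (c + m)
  refine ⟨r, c + m + 1 + m, fun g hin hout hfar z hz => ?_⟩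
  obtain ⟨z₀, hz₀, hz₀c⟩ := hc (g • U) hin hout
  obtain ⟨k₀, hk₀, hk₀z⟩ := exists_inBall_of_mem_innerBoundary_smul hS hm hz₀
  have h₀ := wordInfDist_le_add hS hAn hk₀z.symm
  obtain ⟨k, hk, hkz⟩ := exists_inBall_of_mem_innerBoundary_smul hS hm hz
  have := hr g ⟨k₀, hk₀, by omega⟩ hfar k hk
  have := wordInfDist_le_add hS hAn hkz
  omega

lemma AlmostInv.bddAbove_wordInfDist_translate (hS : Subgroup.closure (S : Set G) = ⊤)
    (hU : AlmostInv K U) (hUn : ¬HFin K U) (hUc : Uᶜ.Nonempty) {g : G}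
    (hfin : HFin K (U ∩ (g⁻¹ • A)ᶜ)) : BddAbove (wordInfDist S A '' (g • U)) := by
  obtain ⟨β, hβ⟩ := hU.exists_wordInfDist_le_ncard hS hUn hUc
  refine ⟨(rightCosetMk K '' (U ∩ (g⁻¹ • A)ᶜ)).ncard + β, ?_⟩
  rintro _ ⟨_, ⟨u, hu, rfl⟩, rfl⟩
  simpa [wordInfDist_inv_smul] using hβ _ u hu hfin

/-- Translating by `H` moves `g` into a fixed finite ball, so the number of cosets of `K` met by
the small corner `U ∩ g⁻¹Aᶜ` is uniformly bounded. -/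
lemma AlmostInv.exists_translate_bound_of_near (hS : Subgroup.closure (S : Set G) = ⊤)
    (hA : ∀ h ∈ H, h • A = A) (hU : AlmostInv K U) (hUn : ¬HFin K U) (hUc : Uᶜ.Nonempty)
    (c : ℕ) :
    ∃ D, ∀ g : G, HFin K (U ∩ (g⁻¹ • A)ᶜ) → (∃ k ∈ K, wordInfDist S H (g * k) ≤ c) →
      ∀ u ∈ U, wordInfDist S A (g * u) ≤ D := by
  obtain ⟨β, hβ⟩ := hU.exists_wordInfDist_le_ncard hS hUn hUc
  obtain ⟨N, hN⟩ := ((finite_setOf_inBall S c 1).image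
    fun σ => (rightCosetMk K '' (U ∩ (σ⁻¹ • A)ᶜ)).ncard).bddAbove
  refine ⟨N + β, fun g hfin ⟨k, hk, hkH⟩ u hu => ?_⟩
  obtain ⟨h, hh, hσ⟩ := (wordInfDist_le_iff hS ⟨1, H.one_mem⟩).mp hkH
  have hσ' : InBall S c 1 (h⁻¹ * (g * k)) := (InBall.mul_left_iff h).mp (by simpa using hσ)
  have hcorner : U ∩ ((h⁻¹ * (g * k))⁻¹ • A)ᶜ = k⁻¹ • (U ∩ (g⁻¹ • A)ᶜ) := by
    rw [show (h⁻¹ * (g * k))⁻¹ = k⁻¹ * g⁻¹ * h by group, mul_smul, hA h hh, mul_smul,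
      Set.smul_set_inter, Set.smul_set_compl, hU.1 _ (K.inv_mem hk)]
  have hNσ : (rightCosetMk K '' (U ∩ ((h⁻¹ * (g * k))⁻¹ • A)ᶜ)).ncard ≤ N := hN ⟨_, hσ', rfl⟩
  rw [hcorner, image_rightCosetMk_smul (K.inv_mem hk)] at hNσ
  have := hβ (g⁻¹ • A) u hu hfin
  rw [wordInfDist_inv_smul] at this
  omega

lemma exists_reachIn_wordInfDist_eq (hS : Subgroup.closure (S : Set G) = ⊤) (hAn : A.Nonempty)
    {c : ℕ} (hc : 0 < c) {w : G} (hw : c ≤ wordInfDist S A w) :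
    ∃ v, ReachIn S {v | c ≤ wordInfDist S A v} w v ∧ wordInfDist S A v = c := by
  obtain ⟨a, ha⟩ := hAn
  obtain ⟨v, s, hwv, hs, hvs⟩ := exists_exit hS (Q := {v | c ≤ wordInfDist S A v}) (y := a) hw
    (by simp [wordInfDist_eq_zero_of_mem ha]; omega)
  have hv : c ≤ wordInfDist S A v := hwv.mem hw
  have hlip := wordInfDist_le_add hS ⟨a, ha⟩ (InBall.of_mem_symmGen (inv_mem_symmGen hs) (v * s))
  rw [mul_inv_cancel_right] at hlip
  replace hvs : wordInfDist S A (v * s) < c := not_le.mp hvs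
  exact ⟨v, hwv, by omega⟩

/-- A component of the far region `{v | c < d(v, A)}` that meets `V` lies in `V`; by the collar
lemma an `H`-translate of it meets a fixed finite ball, so it is either unbounded, which is
impossible inside `V`, or uniformly bounded. -/
lemma AlmostInv.exists_bound_of_innerBoundary (hS : Subgroup.closure (S : Set G) = ⊤)
    (hA : AlmostInv H A) (hAn : A.Nonempty) (c : ℕ) :
    ∃ D, ∀ V : Set G, (∀ z ∈ innerBoundary S V, wordInfDist S A z ≤ c) →
      BddAbove (wordInfDist S A '' V) → ∀ v ∈ V, wordInfDist S A v ≤ D := by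
  obtain ⟨c', hc'⟩ := hA.exists_collar hS hAn (c + 1)
  set far := {v | c + 1 ≤ wordInfDist S A v}
  have hfar : ∀ h ∈ H, h • far = far := fun h hh => by
    ext v
    rw [Set.mem_smul_set_iff_inv_smul_mem, smul_eq_mul]
    simp [far, hA.wordInfDist_mul_left (H.inv_mem hh)]
  obtain ⟨M, hM⟩ := (finite_setOf_inBall S c' 1).exists_forall_le_of_bddAbove
    fun b => wordInfDist S A '' {y | ReachIn S far b y}
  refine ⟨max M c, fun V hV ⟨MV, hMV⟩ w hw => ?_⟩
  by_contra! hw'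
  obtain ⟨v, hwv, hv⟩ : ∃ v, ReachIn S far w v ∧ wordInfDist S A v = c + 1 :=
    exists_reachIn_wordInfDist_eq hS hAn c.succ_pos (by omega)
  obtain ⟨h, hh, hhv⟩ := (wordInfDist_le_iff hS ⟨1, H.one_mem⟩).mp
    (hc' v (not_mem_of_wordInfDist_pos (S := S) (by omega)) hv.le)
  have hb : InBall S c' 1 (h⁻¹ * v) := (InBall.mul_left_iff h).mp (by simpa using hhv)
  have hunb : ¬BddAbove (wordInfDist S A '' {y | ReachIn S far (h⁻¹ * v) y}) := fun hbdd => by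
    have hwb : ReachIn S far (h⁻¹ * v) (h⁻¹ * w) := by
      simpa [hfar _ (H.inv_mem hh)] using hwv.symm.smul h⁻¹
    have := hM _ hb hbdd _ ⟨_, hwb, rfl⟩
    rw [hA.wordInfDist_mul_left (H.inv_mem hh)] at this
    omega
  obtain ⟨_, ⟨y, hy, rfl⟩, hyMV⟩ := not_bddAbove_iff.mp hunb MV
  have hdisj : Disjoint far (innerBoundary S V) :=
    Set.disjoint_left.mpr fun z hz hzV => by have := hV z hzV; simp [far] at hz; omega
  have hyV : h * y ∈ V := by
    refine (hwv.trans ?_).mem_of_disjoint hw hdisj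
    simpa [hfar h hh] using hy.smul h
  have := hMV ⟨_, hyV, rfl⟩
  rw [hA.wordInfDist_mul_left hh] at this
  omega

end Translates

end

/-- There is `D > 0` such that any translate `gU` with `gU ≤ A` is contained in the
`D`-neighbourhood of `A` in the word metric. -/
theorem translate_le_implies_in_bounded_neighbourhood
    {G : Type*} [Group G] (S : Finset G) (hS : Subgroup.closure (S : Set G) = ⊤)
    (H K : Subgroup G) (hH : H.FG) (hK : K.FG) (A U : Set G)
    (hA : NontrivAI H A) (hU : NontrivAI K U) :
    ∃ D : ℕ, 0 < D ∧ ∀ g : G,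
      ((g • U) ∩ Aᶜ = ∅ ∨
        (HFin K (g⁻¹ • ((g • U) ∩ Aᶜ)) ∧ ¬ HFin K (g⁻¹ • ((g • U) ∩ A)) ∧
          ¬ HFin K (g⁻¹ • ((g • U)ᶜ ∩ A)) ∧ ¬ HFin K (g⁻¹ • ((g • U)ᶜ ∩ Aᶜ)))) →
      g • U ⊆ {x : G | ∃ a ∈ A, InBall S D a x} := by
  obtain ⟨hAi, hAn, hAc⟩ := hA
  obtain ⟨hUi, hUn, hUc⟩ := hU
  replace hAn := nonempty_of_not_hFin hAn
  replace hUc := nonempty_of_not_hFin hUc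
  obtain ⟨r, c, hfar⟩ := exists_innerBoundary_translate_near_of_far hS hH hK hAi hAn
    (nonempty_of_not_hFin hAc) hUi
  obtain ⟨D₁, hnear⟩ := hUi.exists_translate_bound_of_near hS hAi.1 hUn hUc r
  obtain ⟨D₂, hbound⟩ := hAi.exists_bound_of_innerBoundary hS hAn c
  refine ⟨max D₁ D₂ + 1, Nat.succ_pos _, fun g hg v hv => (wordInfDist_le_iff hS hAn).mp ?_⟩
  rcases hg with hgA | ⟨hfin, hin, hout, -⟩
  · have hvA : v ∈ A := by_contra fun h => hgA.subset ⟨hv, h⟩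
    simp [wordInfDist_eq_zero_of_mem hvA]
  rw [Set.smul_set_inter, inv_smul_smul, Set.smul_set_compl] at hfin
  by_cases hgK : ∃ k ∈ K, wordInfDist S H (g * k) ≤ r
  · obtain ⟨u, hu, rfl⟩ := hv
    exact (hnear g hfin hgK u hu).trans (by omega)
  push Not at hgK
  have hboundary := hfar g (Set.smul_set_nonempty.mp (nonempty_of_not_hFin hin))
    (Set.smul_set_nonempty.mp (nonempty_of_not_hFin hout)) hgK
  exact (hbound _ hboundary (hUi.bddAbove_wordInfDist_translate hS hUn hUc hfin) v hv).trans
    (by omega)
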